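/- The elementary cellular automaton F_10 satisfies F_10^2 ∘ σ^{-1} = F_10, i.e. F_10^2(σ^{-1}(x)) = F_10(x) for every configuration x ∈ X, where σ^{-1}(x)_i = x_{i-1}; consequently every configuration is eventually weakly periodic for F_10 with n = 1, p = 1 and q = −1. -/
import Mathlib


/-- Cantor metric on configurations `ℤ → Bool`. -/
noncomputable def dC (x y : ℤ → Bool) : ℝ :=
  ∑' i : ℤ, if x i = y i then 0 else (1 / 2 : ℝ) ^ i.natAbs

/-- Local rule of the ECA with rule number `N`:
`(a,b,c)` is mapped to the coefficient of `2^(4a+2b+c)` in the binary expansion of `N`. -/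
def localRule (N : ℕ) (a b c : Bool) : Bool :=
  N.testBit (4 * a.toNat + 2 * b.toNat + c.toNat)

/-- The elementary cellular automaton with rule number `N`. -/
def eca (N : ℕ) (x : ℤ → Bool) : ℤ → Bool :=
  fun i => localRule N (x (i - 1)) (x i) (x (i + 1))

/-- `x` belongs to the cylinder `[u]_0`. -/
def inCyl (u : List Bool) (x : ℤ → Bool) : Prop :=
  ∀ j : Fin u.length, x ((j : ℕ) : ℤ) = u.get j

/-- `u` is an `m`-blocking word for `F`. -/
def Blocking (F : (ℤ → Bool) → ℤ → Bool) (m : ℕ) (u : List Bool) : Prop :=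
  m ≤ u.length ∧ ∃ q : ℕ, q + m ≤ u.length ∧
    ∀ x y : ℤ → Bool, inCyl u x → inCyl u y → ∀ n : ℕ, ∀ j : ℤ,
      (q : ℤ) ≤ j → j < (q : ℤ) + (m : ℤ) → F^[n] x j = F^[n] y j

/-- `x` is an equicontinuity point of `F`. -/
def EquicontinuityPoint (F : (ℤ → Bool) → ℤ → Bool) (x : ℤ → Bool) : Prop :=
  ∀ ε : ℝ, 0 < ε → ∃ δ : ℝ, 0 < δ ∧ ∀ y : ℤ → Bool, dC x y < δ →
    ∀ n : ℕ, dC (F^[n] x) (F^[n] y) < ε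

/-- `F` is almost equicontinuous: it has at least one equicontinuity point. -/
def AlmostEquicontinuousCA (F : (ℤ → Bool) → ℤ → Bool) : Prop :=
  ∃ x : ℤ → Bool, EquicontinuityPoint F x

/-- `F` is equicontinuous: every point is an equicontinuity point. -/
def EquicontinuousCA (F : (ℤ → Bool) → ℤ → Bool) : Prop :=
  ∀ x : ℤ → Bool, EquicontinuityPoint F x

/-- `F` is sensitive to initial conditions. -/
def SensitiveCA (F : (ℤ → Bool) → ℤ → Bool) : Prop :=
  ∃ ε : ℝ, 0 < ε ∧ ∀ x : ℤ → Bool, ∀ δ : ℝ, 0 < δ →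
    ∃ y : ℤ → Bool, dC x y < δ ∧ ∃ n : ℕ, ε ≤ dC (F^[n] x) (F^[n] y)

/-- `F` is positively expansive. -/
def PosExpansiveCA (F : (ℤ → Bool) → ℤ → Bool) : Prop :=
  ∃ ε : ℝ, 0 < ε ∧ ∀ x y : ℤ → Bool, x ≠ y →
    ∃ n : ℕ, ε ≤ dC (F^[n] x) (F^[n] y)

/-- The power `σ^q` of the shift map, for `q : ℤ` : `(σ^q x)_i = x_{i+q}`. -/
def shiftBy (q : ℤ) (x : ℤ → Bool) : ℤ → Bool := fun i => x (i + q)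

/-- `F` is left-permutive. -/
def LeftPermutive (N : ℕ) : Prop :=
  ∀ b c : Bool, Function.Bijective (fun a => localRule N a b c)

/-- `F` is right-permutive. -/
def RightPermutive (N : ℕ) : Prop :=
  ∀ a b : Bool, Function.Bijective (fun c => localRule N a b c)

/-- `U` is open in the Cantor metric topology. -/
def IsOpenC (U : Set (ℤ → Bool)) : Prop :=
  ∀ x ∈ U, ∃ δ : ℝ, 0 < δ ∧ ∀ y : ℤ → Bool, dC x y < δ → y ∈ U

/-- `F` is topologically transitive. -/
def TransitiveCA (F : (ℤ → Bool) → ℤ → Bool) : Prop :=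
  ∀ U V : Set (ℤ → Bool), IsOpenC U → IsOpenC V → U.Nonempty → V.Nonempty →
    ∃ n : ℕ, 0 < n ∧ ((F^[n]) '' U ∩ V).Nonempty

/-- `x` is eventually weakly periodic for `F`: there are `q ∈ ℤ` and `n, p > 0` with
`F^{n+p}(σ^q(x)) = F^n(x)`. -/
def EventuallyWeaklyPeriodicPt (F : (ℤ → Bool) → ℤ → Bool) (x : ℤ → Bool) : Prop :=
  ∃ q : ℤ, ∃ n p : ℕ, 0 < n ∧ 0 < p ∧ F^[n + p] (shiftBy q x) = F^[n] x

theorem eca10_aux (x : ℤ → Bool) :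
    (eca 10)^[2] (shiftBy (-1) x) = eca 10 x := by
  funext i
  show eca 10 (eca 10 (shiftBy (-1) x)) i = eca 10 x i
  simp only [eca, localRule, shiftBy]
  have h : ∀ a b c : Bool,
      Nat.testBit 10 (4 * a.toNat + 2 * b.toNat + c.toNat) = (!a && c) := by decide
  simp only [h]
  have e3 : i - 1 + 1 + -1 = i - 1 := by ring
  have e4 : i + 1 - 1 + -1 = i - 1 := by ring
  have e6 : i + 1 + 1 + -1 = i + 1 := by ring
  rw [e3, e4, e6]
  cases x (i - 1 - 1 + -1) <;> cases x (i - 1) <;> cases x (i + 1) <;> rfl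

/-- ECA rule 10 satisfies `F_10^2 ∘ σ^{-1} = F_10`; consequently every configuration is
eventually weakly periodic for `F_10` (with `n = 1`, `p = 1`, `q = -1`). -/
theorem eca10_weakly_periodic :
    (∀ x : ℤ → Bool, (eca 10)^[2] (shiftBy (-1) x) = eca 10 x) ∧
      ∀ x : ℤ → Bool, EventuallyWeaklyPeriodicPt (eca 10) x := by
  refine ⟨eca10_aux, fun x => ⟨-1, 1, 1, one_pos, one_pos, ?_⟩⟩
  simpa [Function.iterate_succ, Function.iterate_one] using eca10_aux x
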